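/- arXiv:1507.06569 — 2 statements merged into one kernel-verified Lean document; each statement's English description precedes it below -/
import Mathlib

section
/- Suppose λ ⊆ Box_{k,n}, μ is obtained from λ by adding a rim hook of size r with μ ⊄ Box_{k,n}, and ν is obtained from μ by removing a rim hook of size n, with ν ⊆ λ. Then the heights satisfy ht(λ/ν) + ht(μ/λ) = ht(μ/ν) + 1. -/
/-!
The rows of `μ/ν` are the union of the rows of `λ/ν` and of `μ/λ`, so the identity says that
these two row sets share exactly one row. Two shared rows would give shared consecutive rows
`p, p + 1`; consecutive rows of a rim hook overlap in exactly one column, so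
`λ_{p+1} = ν_p + 1 = μ_{p+1}`, and row `p + 1` would miss `μ/λ`. With no shared row, `λ/ν`
lies above `μ/λ`, so the top row of `μ/ν` is a row of `λ ⊆ Box_{k,n}` and `μ/ν` fits in the
first `k` rows and `n - k` columns. The cells of a rim hook lie on distinct diagonals, and that
region meets only `n - 1` diagonals, contradicting `|μ/ν| = n`.
-/

open MvPolynomial


theorem sorted_replicate_ge (m c : ℕ) : (List.replicate m c).Pairwise (· ≥ ·) := by
  induction m with
  | zero => simp
  | succ n ih =>
    rw [List.replicate_succ, List.pairwise_cons]
    exact ⟨fun b hb => (List.eq_of_mem_replicate hb).le, ih⟩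

/-- `h_m` with integer index: zero for negative `m`. -/
noncomputable def hpoly (N : ℕ) (m : ℤ) : MvPolynomial (Fin N) ℚ :=
  if 0 ≤ m then hsymm (Fin N) ℚ m.toNat else 0

/-- The Schur polynomial in `N` variables of a partition (Young diagram), via
the Jacobi–Trudi determinant `det (h_{λ_i + j - i})`. -/
noncomputable def schur (N : ℕ) (μ : YoungDiagram) : MvPolynomial (Fin N) ℚ :=
  Matrix.det (Matrix.of fun i j : Fin μ.rowLens.length =>
    hpoly N ((μ.rowLens.get i : ℤ) + (j : ℤ) - (i : ℤ)))

/-- The hook partition `(b, 1^(a-1))` (with `a` rows; intended for `a, b ≥ 1`). -/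
def hookDiagram (a b : ℕ) : YoungDiagram :=
  YoungDiagram.ofRowLens (max b 1 :: List.replicate (a - 1) 1) (by
    simp only [List.sortedGE_iff_pairwise, List.pairwise_cons]
    refine ⟨fun x hx => ?_, sorted_replicate_ge ..⟩
    rw [List.eq_of_mem_replicate hx]
    omega)

/-- The cells of the skew shape `μ / λ`. -/
def skewCells (lam mu : YoungDiagram) : Finset (ℕ × ℕ) := mu.cells \ lam.cells

/-- Two boxes are (edgewise) adjacent. -/
def Adj (c d : ℕ × ℕ) : Prop :=
  (c.1 = d.1 ∧ (c.2 = d.2 + 1 ∨ d.2 = c.2 + 1)) ∨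
  (c.2 = d.2 ∧ (c.1 = d.1 + 1 ∨ d.1 = c.1 + 1))

/-- A set of boxes is edgewise connected. -/
def IsConnectedCells (s : Finset (ℕ × ℕ)) : Prop :=
  ∀ c ∈ s, ∀ d ∈ s, Relation.ReflTransGen (fun x y => x ∈ s ∧ y ∈ s ∧ Adj x y) c d

/-- A set of boxes contains no 2×2 square. -/
def NoSquare (s : Finset (ℕ × ℕ)) : Prop :=
  ¬∃ i j : ℕ, (i, j) ∈ s ∧ (i + 1, j) ∈ s ∧ (i, j + 1) ∈ s ∧ (i + 1, j + 1) ∈ s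

/-- `μ / λ` is a rim hook (border strip): nonempty, connected, no 2×2 square. -/
def IsRimHook (lam mu : YoungDiagram) : Prop :=
  lam ≤ mu ∧ (skewCells lam mu).Nonempty ∧ IsConnectedCells (skewCells lam mu) ∧
    NoSquare (skewCells lam mu)

/-- The number of boxes of the skew shape `μ / λ`. -/
def skewSize (lam mu : YoungDiagram) : ℕ := (skewCells lam mu).card

/-- The height (number of nonempty rows) of the skew shape `μ / λ`. -/
def skewHt (lam mu : YoungDiagram) : ℕ := ((skewCells lam mu).image Prod.fst).card

/-- The `k × (n-k)` rectangle partition `Box_{k,n}`. -/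
def box (k n : ℕ) : YoungDiagram :=
  YoungDiagram.ofRowLens (List.replicate k (n - k)) (sorted_replicate_ge ..).sortedGE

/-- The diagonal `j - i` of a box `(i, j)`. -/
def diagOf (c : ℕ × ℕ) : ℤ := (c.2 : ℤ) - (c.1 : ℤ)

theorem YoungDiagram.rowLen_le_rowLen_of_le {μ ν : YoungDiagram} (h : μ ≤ ν) (i : ℕ) :
    μ.rowLen i ≤ ν.rowLen i := by
  by_contra! hlt
  exact (YoungDiagram.mem_iff_lt_rowLen.mp (h (YoungDiagram.mem_iff_lt_rowLen.mpr hlt))).false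

theorem rowLen_le_of_le_box {lam : YoungDiagram} {k n : ℕ} (h : lam ≤ box k n) (i : ℕ) :
    lam.rowLen i ≤ n - k := by
  by_contra! hlt
  have hmem : (i, n - k) ∈ box k n := h (YoungDiagram.mem_iff_lt_rowLen.mpr hlt)
  simp [box, YoungDiagram.mem_ofRowLens] at hmem

theorem Adj.fst_eq_or_succ {c d : ℕ × ℕ} (h : Adj c d) :
    c.1 = d.1 ∨ c.1 = d.1 + 1 ∨ d.1 = c.1 + 1 := by
  rcases h with ⟨h, _⟩ | ⟨_, h⟩ <;> omega

namespace IsConnectedCells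

variable {s : Finset (ℕ × ℕ)}

theorem ordConnected_image_fst (hs : IsConnectedCells s) :
    (↑(s.image Prod.fst) : Set ℕ).OrdConnected := by
  refine ⟨?_⟩
  simp only [Finset.coe_image, Set.mem_image, Finset.mem_coe]
  rintro _ ⟨c, hc, rfl⟩ _ ⟨d, hd, rfl⟩ m ⟨hcm, hmd⟩
  induction hs c hc d hd generalizing m with
  | refl => exact ⟨c, hc, by omega⟩
  | @tail b e _ hbe ih =>
    obtain ⟨hb, he, hadj⟩ := hbe
    by_cases hme : m = e.1
    · exact ⟨e, he, hme.symm⟩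
    · exact ih hb hcm (by rcases hadj.fst_eq_or_succ with h | h | h <;> omega)

theorem exists_vertical_pair (hs : IsConnectedCells s) {c d : ℕ × ℕ} (hc : c ∈ s)
    (hd : d ∈ s) {i : ℕ} (hci : c.1 ≤ i) (hid : i < d.1) :
    ∃ j, (i, j) ∈ s ∧ (i + 1, j) ∈ s := by
  induction hs c hc d hd with
  | refl => omega
  | @tail b e _ hbe ih =>
    obtain ⟨hb, he, hadj⟩ := hbe
    by_cases hib : i < b.1
    · exact ih hb hib
    · obtain ⟨b1, b2⟩ := b
      obtain ⟨e1, e2⟩ := e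
      obtain ⟨rfl, rfl⟩ : b1 = i ∧ e1 = i + 1 := by
        rcases hadj.fst_eq_or_succ with h | h | h <;> simp only at h hib hid <;> omega
      obtain rfl : b2 = e2 := by rcases hadj with ⟨h, _⟩ | ⟨h, _⟩ <;> simp only at h <;> omega
      exact ⟨b2, hb, he⟩

end IsConnectedCells

def skewRows (lam mu : YoungDiagram) : Finset ℕ := (skewCells lam mu).image Prod.fst

section SkewShape

variable {nu lam mu : YoungDiagram}

theorem mem_skewCells_iff {i j : ℕ} :
    (i, j) ∈ skewCells nu mu ↔ nu.rowLen i ≤ j ∧ j < mu.rowLen i := by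
  simp only [skewCells, Finset.mem_sdiff, YoungDiagram.mem_cells,
    YoungDiagram.mem_iff_lt_rowLen, not_lt, and_comm]

theorem mem_skewRows_iff {i : ℕ} : i ∈ skewRows nu mu ↔ nu.rowLen i < mu.rowLen i := by
  constructor
  · intro hi
    obtain ⟨⟨_, j⟩, hc, rfl⟩ := Finset.mem_image.mp hi
    exact (mem_skewCells_iff.mp hc).1.trans_lt (mem_skewCells_iff.mp hc).2
  · exact fun hi => Finset.mem_image_of_mem _ (mem_skewCells_iff.mpr ⟨le_rfl, hi⟩)

theorem skewRows_eq_union (hnl : nu ≤ lam) (hlm : lam ≤ mu) :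
    skewRows nu mu = skewRows nu lam ∪ skewRows lam mu := by
  ext i
  have := YoungDiagram.rowLen_le_rowLen_of_le hnl i
  have := YoungDiagram.rowLen_le_rowLen_of_le hlm i
  simp only [Finset.mem_union, mem_skewRows_iff]
  omega

/-- Two cells of a skew shape on one diagonal span a `2 × 2` square inside it. -/
theorem injOn_diagOf_skewCells (h : NoSquare (skewCells nu mu)) :
    Set.InjOn diagOf (skewCells nu mu) := by
  rintro ⟨i, j⟩ hc ⟨i', j'⟩ hc' hdiag
  rw [Finset.mem_coe] at hc hc'
  wlog hii' : i ≤ i' generalizing i j i' j'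
  · exact (this i' j' hc' i j hc hdiag.symm (by omega)).symm
  simp only [diagOf] at hdiag
  obtain rfl | hlt := hii'.eq_or_lt
  · simp only [Prod.mk.injEq, true_and]
    omega
  refine (h ⟨i, j, hc, ?_, ?_, ?_⟩).elim <;> rw [mem_skewCells_iff] at hc hc' ⊢
  all_goals
    have := nu.rowLen_anti i (i + 1) (by omega)
    have := mu.rowLen_anti (i + 1) i' (by omega)
    have := mu.rowLen_anti i (i + 1) (by omega)
    omega

theorem skewSize_le_of_noSquare (h : NoSquare (skewCells nu mu)) {ht w : ℕ}
    (hcells : ∀ c ∈ skewCells nu mu, c.1 < ht ∧ c.2 < w) : skewSize nu mu ≤ w + ht - 1 := by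
  calc skewSize nu mu ≤ (Finset.Ioo (-(ht : ℤ)) w).card :=
        Finset.card_le_card_of_injOn diagOf (fun c hc => ?_) (injOn_diagOf_skewCells h)
    _ = w + ht - 1 := by rw [Int.card_Ioo]; omega
  have := hcells c hc
  rw [Finset.mem_coe, Finset.mem_Ioo, diagOf]
  omega

theorem IsRimHook.ordConnected_skewRows (h : IsRimHook nu mu) :
    (↑(skewRows nu mu) : Set ℕ).OrdConnected :=
  h.2.2.1.ordConnected_image_fst

theorem IsRimHook.rowLen_succ_eq (h : IsRimHook nu mu) {i : ℕ} (hi : i ∈ skewRows nu mu)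
    (hi1 : i + 1 ∈ skewRows nu mu) : mu.rowLen (i + 1) = nu.rowLen i + 1 := by
  rw [mem_skewRows_iff] at hi hi1
  have hc : (i, nu.rowLen i) ∈ skewCells nu mu := mem_skewCells_iff.mpr ⟨le_rfl, hi⟩
  have hd : (i + 1, nu.rowLen (i + 1)) ∈ skewCells nu mu := mem_skewCells_iff.mpr ⟨le_rfl, hi1⟩
  have hnu := nu.rowLen_anti i (i + 1) (by omega)
  have hmu := mu.rowLen_anti i (i + 1) (by omega)
  have hoverlap : nu.rowLen i < mu.rowLen (i + 1) := by
    obtain ⟨j, hj, hj1⟩ := h.2.2.1.exists_vertical_pair hc hd (i := i) le_rfl (Nat.lt_succ_self i)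
    rw [mem_skewCells_iff] at hj hj1
    omega
  have hnarrow : mu.rowLen (i + 1) ≤ nu.rowLen i + 1 := by
    by_contra! hwide
    refine h.2.2.2 ⟨i, nu.rowLen i, hc, ?_, ?_, ?_⟩ <;> rw [mem_skewCells_iff] <;> omega
  omega

end SkewShape

section RimHookDecomposition

variable {nu lam mu : YoungDiagram}

theorem card_skewRows_inter_le_one (h3 : IsRimHook nu lam) (h1 : IsRimHook lam mu)
    (h2 : IsRimHook nu mu) : (skewRows nu lam ∩ skewRows lam mu).card ≤ 1 := by
  have hunion := skewRows_eq_union h3.1 h1.1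
  suffices ∀ p ∈ skewRows nu lam ∩ skewRows lam mu, ∀ q ∈ skewRows nu lam ∩ skewRows lam mu,
      p < q → False by
    refine Finset.card_le_one.mpr fun p hp q hq => ?_
    rcases lt_trichotomy p q with hpq | hpq | hpq
    exacts [(this p hp q hq hpq).elim, hpq, (this q hq p hp hpq).elim]
  intro p hp q hq hpq
  rw [Finset.mem_inter] at hp hq
  have hp3 : p + 1 ∈ skewRows nu lam :=
    h3.ordConnected_skewRows.out hp.1 hq.1 ⟨by omega, by omega⟩
  have hp1 : p + 1 ∈ skewRows lam mu :=
    h1.ordConnected_skewRows.out hp.2 hq.2 ⟨by omega, by omega⟩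
  have hlam := h3.rowLen_succ_eq hp.1 hp3
  have hmu := h2.rowLen_succ_eq (hunion ▸ Finset.mem_union_left _ hp.1)
    (hunion ▸ Finset.mem_union_left _ hp3)
  rw [mem_skewRows_iff] at hp1
  omega

/-- Were `a` a row of `μ/λ`, so would be the row `c - 1` above the top row `c` of `λ/ν`, and
the rim hook `μ/ν` would force `λ_c = λ_{c-1} + 1`. -/
theorem top_skewRow_notMem_of_disjoint (h3 : IsRimHook nu lam) (hlm : lam ≤ mu)
    (h2 : IsRimHook nu mu) (hdisj : Disjoint (skewRows nu lam) (skewRows lam mu)) {a : ℕ}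
    (ha : IsLeast (↑(skewRows nu mu) : Set ℕ) a) : a ∉ skewRows lam mu := by
  intro haR1
  have hunion := skewRows_eq_union h3.1 hlm
  have hR3 : (skewRows nu lam).Nonempty := h3.2.1.image _
  set c := (skewRows nu lam).min' hR3
  have hcR3 : c ∈ skewRows nu lam := Finset.min'_mem _ _
  have hcR2 : c ∈ skewRows nu mu := hunion ▸ Finset.mem_union_left _ hcR3
  have hac : a < c := (ha.2 hcR2).lt_of_ne fun hac =>
    Finset.disjoint_left.mp hdisj (hac ▸ hcR3) haR1
  obtain ⟨m, hm⟩ : ∃ m, c = m + 1 := ⟨c - 1, by omega⟩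
  have hmR2 : m ∈ skewRows nu mu := h2.ordConnected_skewRows.out ha.1 hcR2 ⟨by omega, by omega⟩
  have hmR3 : m ∉ skewRows nu lam := fun h => by
    have := Finset.min'_le _ _ h
    omega
  have hmR1 : m ∈ skewRows lam mu := by
    simpa [hunion, hmR3] using hmR2
  have hcR1 : c ∉ skewRows lam mu := Finset.disjoint_left.mp hdisj hcR3
  have hstep := h2.rowLen_succ_eq hmR2 (hm ▸ hcR2)
  rw [hm, mem_skewRows_iff] at hcR3 hcR1
  rw [mem_skewRows_iff] at hmR1 hmR3
  have := lam.rowLen_anti m (m + 1) (by omega)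
  omega

theorem skewRows_inter_nonempty_of_le_box {k n : ℕ} (hkn : k < n) (hlam : lam ≤ box k n)
    (hcl : mu.colLen 0 ≤ k) (h3 : IsRimHook nu lam) (hlm : lam ≤ mu) (h2 : IsRimHook nu mu)
    (hs2 : skewSize nu mu = n) : (skewRows nu lam ∩ skewRows lam mu).Nonempty := by
  rw [Finset.nonempty_iff_ne_empty, ne_eq, ← Finset.disjoint_iff_inter_eq_empty]
  intro hdisj
  obtain ⟨a, ha⟩ : ∃ a, IsLeast (↑(skewRows nu mu) : Set ℕ) a :=
    ⟨_, Finset.isLeast_min' _ (h2.2.1.image _)⟩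
  have hrow : mu.rowLen a ≤ n - k := by
    have := top_skewRow_notMem_of_disjoint h3 hlm h2 hdisj ha
    rw [mem_skewRows_iff] at this
    have := rowLen_le_of_le_box hlam a
    omega
  have hcells : ∀ c ∈ skewCells nu mu, c.1 < k ∧ c.2 < mu.rowLen a := by
    rintro ⟨i, j⟩ hc
    have hai : a ≤ i := ha.2 (Finset.mem_image_of_mem _ hc)
    have hj := (mem_skewCells_iff.mp hc).2
    have hi : i < mu.colLen 0 := YoungDiagram.mem_iff_lt_colLen.mp
      (YoungDiagram.mem_iff_lt_rowLen.mpr (by omega))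
    exact ⟨by omega, hj.trans_le (mu.rowLen_anti a i hai)⟩
  have := skewSize_le_of_noSquare h2.2.2.2 hcells
  omega

end RimHookDecomposition

theorem height_identity_general (k n : ℕ) (hkn : k < n)
    (nu lam mu : YoungDiagram) (hlam : lam ≤ box k n) (hcl : mu.colLen 0 ≤ k)
    (h1 : IsRimHook lam mu)
    (h2 : IsRimHook nu mu) (hs2 : skewSize nu mu = n)
    (h3 : IsRimHook nu lam) :
    skewHt nu lam + skewHt lam mu = skewHt nu mu + 1 := by
  have hinter : (skewRows nu lam ∩ skewRows lam mu).card = 1 :=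
    (card_skewRows_inter_le_one h3 h1 h2).antisymm <| Finset.card_pos.mpr <|
      skewRows_inter_nonempty_of_le_box hkn hlam hcl h3 h1.1 h2 hs2
  have hcard := Finset.card_union_add_card_inter (skewRows nu lam) (skewRows lam mu)
  change (skewRows nu lam).card + (skewRows lam mu).card = (skewRows nu mu).card + 1
  rw [skewRows_eq_union h3.1 h1.1]
  omega

/-- the height identity `ht(λ/ν) + ht(μ/λ) = ht(μ/ν) + 1`. -/
theorem height_identity (k n r : ℕ) (hk : 0 < k) (hkn : k < n) (hr : 0 < r) (hrn : r < n)
    (nu lam mu : YoungDiagram) (hlam : lam ≤ box k n) (hcl : mu.colLen 0 ≤ k)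
    (h1 : IsRimHook lam mu) (hs1 : skewSize lam mu = r) (hnot : ¬mu ≤ box k n)
    (h2 : IsRimHook nu mu) (hs2 : skewSize nu mu = n)
    (h3 : IsRimHook nu lam) (hs3 : skewSize nu lam = n - r) :
    skewHt nu lam + skewHt lam mu = skewHt nu mu + 1 :=
  height_identity_general k n hkn nu lam mu hlam hcl h1 h2 hs2 h3
end

section
/- In the quotient ring Λ_k/(h_{n−k+1},…,h_{n−1}) of symmetric polynomials in k variables, the relation h_n + (−1)^k s_{(n−k+1,1^{k−1})} = 0 holds. -/
/-!
Expanding the Jacobi–Trudi determinant of the hook `(b, 1^(k-1))`, `b = n - k + 1`, along its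
first column again and again gives `s_{(b,1^(k-1))} = ∑_{r<k} (-1)^r e_{k-1-r} h_{b+r}`, where
`e_d` appears as the `d × d` Toeplitz determinant `det (h_{1+j-i})`. The term `r = k - 1` is
`(-1)^(k-1) h_n`; all the others are symmetric multiples of `h_{n-k+1}, …, h_{n-1}`.
-/

open MvPolynomial


/-- For `h` the sequence of complete homogeneous polynomials, the Jacobi–Trudi matrix of the
hook `(b, 1^(m-1))`. -/
def hookMatrix {R : Type*} (h : ℤ → R) (m : ℕ) (b : ℤ) : Matrix (Fin m) (Fin m) R :=
  Matrix.of fun i j => h ((if (i : ℕ) = 0 then b else 1) + j - i)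

section HookMatrix

variable {R : Type*} [CommRing R] (h : ℤ → R)

theorem det_hookMatrix_zero (b : ℤ) : (hookMatrix h 0 b).det = 1 := Matrix.det_fin_zero

/-- Laplace expansion along the first column, which is `(h_b, 1, 0, …, 0)`. -/
theorem det_hookMatrix_add_two (h_zero : h 0 = 1) (h_neg : ∀ m < 0, h m = 0) (m : ℕ) (b : ℤ) :
    (hookMatrix h (m + 2) b).det =
      h b * (hookMatrix h (m + 1) 1).det - (hookMatrix h (m + 1) (b + 1)).det := by
  have lower_entry : ∀ i : Fin m, hookMatrix h (m + 2) b i.succ.succ 0 = 0 := fun i =>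
    h_neg _ (by simp; omega)
  have minor_zero : (hookMatrix h (m + 2) b).submatrix (Fin.succAbove 0) Fin.succ =
      hookMatrix h (m + 1) 1 := by
    ext i j
    simp [hookMatrix]
    ring_nf
  have minor_one : (hookMatrix h (m + 2) b).submatrix (Fin.succ 0).succAbove Fin.succ =
      hookMatrix h (m + 1) (b + 1) := by
    ext i j
    cases i using Fin.cases <;> simp [hookMatrix, Fin.succAbove] <;> ring_nf
  rw [Matrix.det_succ_column_zero, Fin.sum_univ_succ, Fin.sum_univ_succ,
    Finset.sum_eq_zero fun i _ => by rw [lower_entry, mul_zero, zero_mul], minor_zero, minor_one]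
  simp [hookMatrix, h_zero]
  ring

theorem det_hookMatrix_add_one (h_zero : h 0 = 1) (h_neg : ∀ m < 0, h m = 0) (m : ℕ) (b : ℤ) :
    (hookMatrix h (m + 1) b).det =
      ∑ r ∈ Finset.range (m + 1), (-1) ^ r * (hookMatrix h (m - r) 1).det * h (b + r) := by
  induction m generalizing b with
  | zero => simp [hookMatrix]
  | succ m ih =>
    rw [det_hookMatrix_add_two h h_zero h_neg, ih (b + 1), Finset.sum_range_succ' _ (m + 1),
      sub_eq_add_neg, ← Finset.sum_neg_distrib, add_comm]
    congr 1
    · refine Finset.sum_congr rfl fun r _ => ?_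
      rw [Nat.add_sub_add_right, pow_succ]
      push_cast
      ring_nf
    · simp [mul_comm]

theorem add_neg_one_pow_mul_det_hookMatrix (h_zero : h 0 = 1) (h_neg : ∀ m < 0, h m = 0)
    (m : ℕ) (b : ℤ) :
    h (b + m) + (-1) ^ (m + 1) * (hookMatrix h (m + 1) b).det =
      ∑ r ∈ Finset.range m, (-1) ^ (m - r + 1) * (hookMatrix h (m - r) 1).det * h (b + r) := by
  have sign (r : ℕ) (hr : r < m) : (-1 : R) ^ (m + 1) * (-1) ^ r = (-1) ^ (m - r + 1) := by
    rw [← pow_add, show m + 1 + r = m - r + 1 + 2 * r by omega, pow_add, pow_mul, neg_one_sq,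
      one_pow, mul_one]
  have last : (-1 : R) ^ (m + 1) * (-1) ^ m = -1 := by
    rw [← pow_add, Odd.neg_one_pow ⟨m, by ring⟩]
  rw [det_hookMatrix_add_one h h_zero h_neg, Finset.sum_range_succ, mul_add, Finset.mul_sum,
    Nat.sub_self, det_hookMatrix_zero, mul_one, ← mul_assoc, last, add_comm, add_assoc,
    neg_one_mul, neg_add_cancel, add_zero]
  refine Finset.sum_congr rfl fun r hr => ?_
  rw [← sign r (Finset.mem_range.mp hr)]
  ring

end HookMatrix

theorem MvPolynomial.IsSymmetric.det {σ R ι : Type*} [CommRing R] [Fintype ι] [DecidableEq ι]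
    {M : Matrix ι ι (MvPolynomial σ R)} (hM : ∀ i j, (M i j).IsSymmetric) :
    M.det.IsSymmetric := by
  intro e
  rw [← AlgHom.coe_toRingHom, RingHom.map_det]
  congr
  exact Matrix.ext fun i j => hM i j e

section JacobiTrudi

variable (N : ℕ)

theorem hpoly_zero : hpoly N 0 = 1 := by simp [hpoly]

theorem hpoly_of_neg {m : ℤ} (hm : m < 0) : hpoly N m = 0 := by simp [hpoly, hm]

theorem hpoly_natCast (m : ℕ) : hpoly N m = hsymm (Fin N) ℚ m := by simp [hpoly]

theorem hpoly_isSymmetric (m : ℤ) : (hpoly N m).IsSymmetric := by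
  unfold hpoly
  split
  · exact hsymm_isSymmetric _ _ _
  · exact .zero

theorem rowLens_hookDiagram {a b : ℕ} (hb : 0 < b) :
    (hookDiagram a b).rowLens = b :: List.replicate (a - 1) 1 := by
  rw [hookDiagram, YoungDiagram.rowLens_ofRowLens_eq_self, max_eq_left hb]
  simp

theorem schur_hookDiagram {a b : ℕ} (ha : 0 < a) (hb : 0 < b) :
    schur N (hookDiagram a b) = (hookMatrix (hpoly N) a b).det := by
  have hlen : (hookDiagram a b).rowLens.length = a := by
    rw [rowLens_hookDiagram hb]; simp; omega
  rw [schur, ← Matrix.det_reindex_self (finCongr hlen)]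
  congr 1
  ext i j
  simp [hookMatrix, rowLens_hookDiagram hb, List.getElem_cons]

end JacobiTrudi

/-- in `Λ_k/(h_{n-k+1},…,h_{n-1})` the relation
`h_n + (-1)^k s_{(n-k+1,1^{k-1})} = 0` holds, i.e. the left side lies in the ideal of
`Λ_k` generated by `h_{n-k+1},…,h_{n-1}` (membership witnessed with symmetric
coefficients). -/
theorem hn_plus_hookSchur_mem_ideal (k n : ℕ) (hk : 0 < k) (hkn : k < n) :
    ∃ c : ℕ → MvPolynomial (Fin k) ℚ, (∀ j, (c j).IsSymmetric) ∧
      hsymm (Fin k) ℚ n + ((-1 : ℚ) ^ k) • schur k (hookDiagram k (n - k + 1)) =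
        ∑ j ∈ Finset.Icc (n - k + 1) (n - 1), c j * hsymm (Fin k) ℚ j := by
  obtain ⟨m, rfl⟩ : ∃ m, k = m + 1 := ⟨k - 1, by omega⟩
  refine ⟨fun j => (-1) ^ (n - j + 1) * (hookMatrix (hpoly (m + 1)) (n - j) 1).det, fun j => ?_, ?_⟩
  · exact .mul ((symmetricSubalgebra _ ℚ).pow_mem (IsSymmetric.neg .one) _)
      (.det fun _ _ => hpoly_isSymmetric _ _)
  have expansion := add_neg_one_pow_mul_det_hookMatrix (hpoly (m + 1)) (hpoly_zero _)
    (fun _ => hpoly_of_neg _) m (n - m : ℕ)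
  rw [show n - (m + 1) + 1 = n - m by omega, schur_hookDiagram _ (by omega) (by omega),
    show Finset.Icc (n - m) (n - 1) = Finset.Ico (n - m) n by ext; simp; omega,
    Finset.sum_Ico_eq_sum_range, show n - (n - m) = m by omega, Algebra.smul_def]
  simp only [← Nat.cast_add, hpoly_natCast, Nat.sub_add_cancel (by omega : m ≤ n)] at expansion
  rw [map_pow, map_neg, map_one, expansion]
  refine Finset.sum_congr rfl fun r hr => ?_
  dsimp only
  rw [show n - (n - m + r) = m - r by have := Finset.mem_range.mp hr; omega]
end
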